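/- An R-module E is RD-injective if and only if for every RD-embedding f : A → B of R-modules with card(A), card(B) ≤ κ and every R-homomorphism g : A → E, there is an R-homomorphism h : B → E such that h ∘ f = g. -/

import Mathlib

universe u

/-- `A` is an RD-submodule of its ambient module: for every `r : R`,
`A ∩ r • M = r • A`. -/
def IsRDSubmodule {R : Type*} [Ring R] {M : Type*} [AddCommGroup M] [Module R M]
    (A : Submodule R M) : Prop :=
  ∀ (r : R) (x : M), x ∈ A → (∃ b : M, r • b = x) → ∃ a : M, a ∈ A ∧ r • a = x

/-- An RD-embedding is an injective linear map whose image is an RD-submodule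
of its codomain. -/
def IsRDEmbedding {R : Type*} [Ring R] {M N : Type*} [AddCommGroup M] [Module R M]
    [AddCommGroup N] [Module R N] (f : M →ₗ[R] N) : Prop :=
  Function.Injective f ∧ IsRDSubmodule (LinearMap.range f)

/-- `E` is RD-injective: every homomorphism `g : A → E` extends along every
RD-embedding `f : A → B`. -/
def RDInjective (R : Type u) [Ring R] (E : Type u) [AddCommGroup E] [Module R E] : Prop :=
  ∀ (A B : Type u) [AddCommGroup A] [Module R A] [AddCommGroup B] [Module R B]
    (f : A →ₗ[R] B), IsRDEmbedding f →
    ∀ g : A →ₗ[R] E, ∃ h : B →ₗ[R] E, h.comp f = g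

/-!
Given an RD-embedding `f : A → B` and `g : A → E`, apply Zorn's lemma to the partial maps
`B →ₗ.[R] E` extending `g` on `f(A)` whose domain is an RD-submodule of `B`. A maximal such map
`p` is total: for `b` outside its domain `C`, closing `{b}` under `R`-indexed choices of witnesses
(ω rounds, each adding at most `κ` elements) yields a submodule `D ∋ b` of size at most `κ` such
that `C ∩ D` is RD in `D` and every `d ∈ D` congruent to `C` modulo `r • B` is already congruent
to `C` modulo `r • D`. The second property makes `C + D` RD in `B`, and the first lets the
hypothesis extend `p` from `C ∩ D` to `D`; the two maps glue on `C + D`, contradicting maximality.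
-/

open Cardinal Set

section Cardinality

variable {R M : Type u} [Ring R] [AddCommGroup M] [Module R M]

theorem Submodule.mk_span_le_of_le {κ : Cardinal.{u}} (hℵ₀ : ℵ₀ ≤ κ) (hR : #R ≤ κ)
    {s : Set M} (hs : #s ≤ κ) : #(Submodule.span R s) ≤ κ := by
  classical
  rw [Finsupp.span_eq_range_linearCombination]
  calc #(LinearMap.range (Finsupp.linearCombination R ((↑) : s → M)))
      ≤ #(s →₀ R) := mk_le_of_surjective (LinearMap.surjective_rangeRestrict _)
    _ ≤ #(Finset (s × R)) := mk_le_of_injective (Finsupp.graph_injective s R)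
    _ ≤ #(List (s × R)) := mk_le_of_surjective List.toFinset_surjective
    _ ≤ max ℵ₀ #(s × R) := mk_list_le_max _
    _ ≤ κ := by
      rw [mk_prod, lift_id, lift_id]
      exact max_le hℵ₀ (mul_le_mul' hs hR |>.trans (mul_eq_self hℵ₀).le)

theorem Submodule.exists_mk_le_forall_mapsTo {ι : Type u} (w : ι → M → M) {κ : Cardinal.{u}}
    (hℵ₀ : ℵ₀ ≤ κ) (hR : #R ≤ κ) (hι : #ι ≤ κ) {s : Set M} (hs : #s ≤ κ) :
    ∃ D : Submodule R M, s ⊆ D ∧ #D ≤ κ ∧ ∀ i, MapsTo (w i) D D := by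
  let step : Submodule R M → Submodule R M := fun D => span R (D ∪ image2 w univ D)
  have le_step : ∀ D, D ≤ step D := fun D => subset_union_left.trans subset_span
  have mk_step : ∀ D : Submodule R M, #D ≤ κ → #(step D) ≤ κ := fun D hD =>
    mk_span_le_of_le hℵ₀ hR <| calc
      #(↑D ∪ image2 w univ ↑D : Set M) ≤ #D + #(univ : Set ι) * #D :=
        (mk_union_le _ _).trans (add_le_add_right mk_image2_le _)
      _ ≤ κ + κ * κ := by rw [mk_univ]; gcongr
      _ = κ := by rw [mul_eq_self hℵ₀, add_eq_self hℵ₀]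
  let Dn : ℕ → Submodule R M := fun n => step^[n] (span R s)
  have Dn_succ : ∀ n, Dn (n + 1) = step (Dn n) := fun n => Function.iterate_succ_apply' ..
  have Dn_mono : Monotone Dn := monotone_nat_of_le_succ fun n => (Dn_succ n).symm ▸ le_step _
  have mk_Dn : ∀ n, #(Dn n) ≤ κ := by
    intro n
    induction n with
    | zero => exact mk_span_le_of_le hℵ₀ hR hs
    | succ n ih => exact (Dn_succ n).symm ▸ mk_step _ ih
  have mem_iSup : ∀ x, x ∈ ⨆ n, Dn n ↔ ∃ n, x ∈ Dn n := fun _ =>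
    Submodule.mem_iSup_of_directed Dn Dn_mono.directed_le
  refine ⟨⨆ n, Dn n, subset_span.trans (le_iSup Dn 0), ?_, ?_⟩
  · show #((⨆ n, Dn n : Submodule R M) : Set M) ≤ κ
    rw [Submodule.coe_iSup_of_directed Dn Dn_mono.directed_le]
    have := (mk_iUnion_le_sum_mk_lift (f := fun n => (Dn n : Set M))).trans
      (sum_le_sum _ _ mk_Dn)
    rw [lift_uzero, sum_const, mk_nat, lift_aleph0, lift_uzero] at this
    exact this.trans (aleph0_mul_eq hℵ₀).le
  · intro i x hx
    obtain ⟨n, hn⟩ := (mem_iSup x).1 hx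
    exact (mem_iSup _).2 ⟨n + 1, Dn_succ n ▸ subset_span (Or.inr (mem_image2_of_mem trivial hn))⟩

end Cardinality

section RDSubmodule

variable {R M : Type*} [Ring R] [AddCommGroup M] [Module R M]

theorem IsRDSubmodule.sSup_of_directedOn {s : Set (Submodule R M)} (hne : s.Nonempty)
    (hdir : DirectedOn (· ≤ ·) s) (hs : ∀ A ∈ s, IsRDSubmodule A) : IsRDSubmodule (sSup s) := by
  intro r x hx hdiv
  obtain ⟨A, hA, hxA⟩ := (Submodule.mem_sSup_of_directed hne hdir).1 hx
  obtain ⟨a, haA, rfl⟩ := hs A hA r x hxA hdiv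
  exact ⟨a, Submodule.mem_sSup_of_mem hA haA, rfl⟩

theorem IsRDSubmodule.sup {C D : Submodule R M} (hC : IsRDSubmodule C)
    (hD : ∀ (r : R), ∀ d ∈ D, (∃ y, d - r • y ∈ C) → ∃ d' ∈ D, d - r • d' ∈ C) :
    IsRDSubmodule (C ⊔ D) := by
  intro r x hx ⟨y, hy⟩
  obtain ⟨c, hc, d, hd, rfl⟩ := Submodule.mem_sup.1 hx
  obtain ⟨d', hd', hdd'⟩ := hD r d hd ⟨y, by rw [hy, sub_add_cancel_right]; exact C.neg_mem hc⟩
  have hcd : c + d - r • d' ∈ C := by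
    rw [add_sub_assoc]; exact C.add_mem hc hdd'
  obtain ⟨c', hc', hrc'⟩ := hC r _ hcd ⟨y - d', by rw [smul_sub, hy]⟩
  exact ⟨c' + d', Submodule.add_mem_sup hc' hd', by rw [smul_add, hrc', sub_add_cancel]⟩

theorem IsRDSubmodule.isRDEmbedding_subtype {A : Submodule R M} (hA : IsRDSubmodule A) :
    IsRDEmbedding A.subtype :=
  ⟨A.injective_subtype, by rwa [A.range_subtype]⟩

end RDSubmodule

theorem IsRDSubmodule.exists_small_submodule {R M : Type u} [Ring R] [AddCommGroup M]
    [Module R M] {C : Submodule R M} (hC : IsRDSubmodule C) (b : M) :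
    ∃ D : Submodule R M, b ∈ D ∧ #D ≤ max #R ℵ₀ ∧ IsRDSubmodule (C.comap D.subtype) ∧
      ∀ (r : R), ∀ d ∈ D, (∃ y, d - r • y ∈ C) → ∃ d' ∈ D, d - r • d' ∈ C := by
  let divisor (r : R) (x : M) : M := Classical.epsilon fun c => c ∈ C ∧ r • c = x
  let offset (r : R) (x : M) : M := Classical.epsilon fun y => x - r • y ∈ C
  obtain ⟨D, hbD, hD, hDclosed⟩ := Submodule.exists_mk_le_forall_mapsTo (R := R)
    (Sum.elim divisor offset) (le_max_right _ _) (le_max_left _ _)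
    (by rw [mk_sum, lift_id]
        exact add_le_of_le (le_max_right _ _) (le_max_left _ _) (le_max_left _ _))
    (s := {b}) (by rw [mk_singleton]; exact one_le_aleph0.trans (le_max_right _ _))
  refine ⟨D, hbD rfl, hD, ?_, fun r d hd hdiv => ⟨offset r d, hDclosed (.inr r) hd,
    Classical.epsilon_spec hdiv⟩⟩
  rintro r x hx ⟨y, rfl⟩
  have hc := Classical.epsilon_spec (hC r _ hx ⟨y, rfl⟩)
  exact ⟨⟨divisor r (r • y), hDclosed (.inl r) (r • y).2⟩, hc.1, Subtype.ext hc.2⟩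

def SmallRDInjective (R : Type u) [Ring R] (E : Type u) [AddCommGroup E] [Module R E] : Prop :=
  ∀ (A B : Type u) [AddCommGroup A] [Module R A] [AddCommGroup B] [Module R B]
    (f : A →ₗ[R] B), IsRDEmbedding f → #A ≤ max #R ℵ₀ → #B ≤ max #R ℵ₀ →
    ∀ g : A →ₗ[R] E, ∃ h : B →ₗ[R] E, h.comp f = g

section Extension

variable {R B E : Type u} [Ring R] [AddCommGroup B] [Module R B] [AddCommGroup E] [Module R E]

theorem SmallRDInjective.exists_le_mem_domain (hE : SmallRDInjective R E)
    (p : B →ₗ.[R] E) (hp : IsRDSubmodule p.domain) (b : B) :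
    ∃ q : B →ₗ.[R] E, p ≤ q ∧ IsRDSubmodule q.domain ∧ b ∈ q.domain := by
  obtain ⟨D, hbD, hD, hpD, hDoffset⟩ := hp.exists_small_submodule b
  obtain ⟨k, hk⟩ := hE _ D _ hpD.isRDEmbedding_subtype
    ((mk_le_of_injective (Submodule.injective_subtype _)).trans hD) hD
    (p.toFun.comp (D.subtype.restrict fun _ h => h))
  let q : B →ₗ.[R] E := ⟨D, k⟩
  have compat : ∀ (x : p.domain) (y : q.domain), (x : B) = y → p x = q y := fun x y hxy => by
    have := LinearMap.congr_fun hk ⟨y, show (y : B) ∈ p.domain from hxy ▸ x.2⟩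
    exact (congrArg p.toFun (Subtype.ext hxy)).trans this.symm
  refine ⟨p.sup q compat, p.left_le_sup q compat, ?_, ?_⟩
  · rw [LinearPMap.domain_sup]; exact hp.sup hDoffset
  · rw [LinearPMap.domain_sup]; exact Submodule.mem_sup_right hbD

theorem SmallRDInjective.exists_extension (hE : SmallRDInjective R E)
    (p₀ : B →ₗ.[R] E) (hp₀ : IsRDSubmodule p₀.domain) :
    ∃ h : B →ₗ[R] E, ∀ x : p₀.domain, h x = p₀ x := by
  obtain ⟨p, hp₀p, hpmax⟩ := zorn_le_nonempty₀ {p : B →ₗ.[R] E | IsRDSubmodule p.domain}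
    (fun c hcS hc y hy => by
      refine ⟨LinearPMap.sSup c hc.directedOn, ?_, fun _ => LinearPMap.le_sSup hc.directedOn⟩
      rw [Set.mem_ofPred_eq, LinearPMap.domain_sSup]
      exact .sSup_of_directedOn ⟨_, y, hy, rfl⟩
        (directedOn_image.2 (hc.directedOn.mono fun _ _ h => h.1)) (forall_mem_image.2 hcS))
    p₀ hp₀
  have hdom : p.domain = ⊤ := Submodule.eq_top_iff'.2 fun b => by
    obtain ⟨q, hpq, hq, hb⟩ := hE.exists_le_mem_domain p hpmax.1 b
    exact (hpmax.2 hq hpq).1 hb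
  exact ⟨p.toFun.comp (LinearEquiv.ofTop _ hdom).symm.toLinearMap,
    fun x => (hp₀p.2 rfl).symm⟩

theorem SmallRDInjective.rdInjective (hE : SmallRDInjective R E) : RDInjective R E := by
  intro A B _ _ _ _ f hf g
  obtain ⟨h, hh⟩ := hE.exists_extension
    ⟨LinearMap.range f, g.comp (LinearEquiv.ofInjective f hf.1).symm.toLinearMap⟩ hf.2
  exact ⟨h, LinearMap.ext fun a => (hh ⟨f a, a, rfl⟩).trans
    (congrArg g ((LinearEquiv.ofInjective f hf.1).symm_apply_apply a))⟩

end Extension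

theorem stmt9 (R : Type u) [Ring R] (E : Type u) [AddCommGroup E] [Module R E] :
    RDInjective R E ↔
      ∀ (A B : Type u) [AddCommGroup A] [Module R A] [AddCommGroup B] [Module R B]
        (f : A →ₗ[R] B), IsRDEmbedding f →
        Cardinal.mk A ≤ max (Cardinal.mk R) Cardinal.aleph0 →
        Cardinal.mk B ≤ max (Cardinal.mk R) Cardinal.aleph0 →
        ∀ g : A →ₗ[R] E, ∃ h : B →ₗ[R] E, h.comp f = g :=
  ⟨fun hE A B _ _ _ _ f hf _ _ g => hE A B f hf g, SmallRDInjective.rdInjective⟩
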